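/- For a quadratic form q of corank 2 on a 4-dimensional vector space V over an algebraically closed field of characteristic ≠ 2, the Fano variety of isotropic 2-planes in Gr(2, V) is the union Gr(2, W⁺) ∪ Gr(2, W⁻) of two copies of P², intersecting exactly in the single point corresponding to K = W⁺ ∩ W⁻. -/
import Mathlib


open Module

/-- For a quadratic form `q` of corank 2 on a 4-dimensional vector space `V`
over an algebraically closed field of characteristic ≠ 2 (radical `K` of dimension 2,
zero locus `W⁺ ∪ W⁻` with `dim W^± = 3` and `W⁺ ∩ W⁻ = K`), the Fano variety of isotropic
2-planes `{U ∈ Gr(2,V) : q|_U = 0}` is the union `Gr(2, W⁺) ∪ Gr(2, W⁻)` of two copies of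
`P²`, and these intersect exactly in the single point `K = W⁺ ∩ W⁻ ∈ Gr(2, V)`. -/
theorem stmt16 (k V : Type*) [Field k] [IsAlgClosed k] [Invertible (2 : k)]
    [AddCommGroup V] [Module k V] (hV : finrank k V = 4)
    (q : QuadraticForm k V) (hq : q ≠ 0)
    (K : Submodule k V) (hK : K = LinearMap.ker (QuadraticMap.polarBilin q))
    (hKdim : finrank k K = 2)
    (Wp Wm : Submodule k V) (hWp : finrank k Wp = 3) (hWm : finrank k Wm = 3)
    (hzero : {v : V | q v = 0} = (Wp : Set V) ∪ (Wm : Set V))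
    (hint : Wp ⊓ Wm = K) :
    {U : Submodule k V | finrank k U = 2 ∧ ∀ v ∈ U, q v = 0} =
      {U : Submodule k V | finrank k U = 2 ∧ U ≤ Wp} ∪
      {U : Submodule k V | finrank k U = 2 ∧ U ≤ Wm} ∧
    {U : Submodule k V | finrank k U = 2 ∧ U ≤ Wp} ∩
      {U : Submodule k V | finrank k U = 2 ∧ U ≤ Wm} = {K} := by
  have hfd : FiniteDimensional k V := FiniteDimensional.of_finrank_pos (by omega)
  have hWpz : ∀ v ∈ Wp, q v = 0 := fun v hv => by
    have : v ∈ {v : V | q v = 0} := by rw [hzero]; exact Or.inl hv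
    exact this
  have hWmz : ∀ v ∈ Wm, q v = 0 := fun v hv => by
    have : v ∈ {v : V | q v = 0} := by rw [hzero]; exact Or.inr hv
    exact this
  constructor
  · ext U
    simp only [Set.mem_setOf_eq, Set.mem_union]
    constructor
    · rintro ⟨hU2, hUz⟩
      have hsub : (U : Set V) ⊆ (Wp : Set V) ∪ (Wm : Set V) := fun v hv => by
        rw [← hzero]; exact hUz v hv
      by_cases hp : U ≤ Wp
      · exact Or.inl ⟨hU2, hp⟩
      · right
        refine ⟨hU2, fun y hy => ?_⟩
        obtain ⟨x, hxU, hxp⟩ := Set.not_subset.1 (fun h => hp h)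
        have hxm : x ∈ Wm := (hsub hxU).resolve_left hxp
        rcases hsub hy with hyp | hym
        · -- y ∈ Wp : consider x + y
          rcases hsub (U.add_mem hxU hy) with hs | hs
          · exact absurd (by simpa using Wp.sub_mem hs hyp) hxp
          · simpa using Wm.sub_mem hs hxm
        · exact hym
    · rintro (⟨hU2, hle⟩ | ⟨hU2, hle⟩)
      · exact ⟨hU2, fun v hv => hWpz v (hle hv)⟩
      · exact ⟨hU2, fun v hv => hWmz v (hle hv)⟩
  · ext U
    simp only [Set.mem_inter_iff, Set.mem_setOf_eq, Set.mem_singleton_iff]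
    constructor
    · rintro ⟨⟨hU2, hp⟩, ⟨_, hm⟩⟩
      have hle : U ≤ K := hint ▸ le_inf hp hm
      exact Submodule.eq_of_le_of_finrank_eq hle (by rw [hU2, hKdim])
    · rintro rfl
      exact ⟨⟨hKdim, hint ▸ inf_le_left⟩, ⟨hKdim, hint ▸ inf_le_right⟩⟩
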